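/- Let G₁, G₁′, G₂, G₂′ be simple graphs, each on n vertices with m edges. If LE(G₁) = LE(G₁′) and LE(G₂) = LE(G₂′), then LE(G₁ ∨ G₂) = LE(G₁′ ∨ G₂′). -/

import Mathlib

open SimpleGraph Matrix Finset

/-- The number of edges of a simple graph. -/
noncomputable def edgeCount {V : Type*} (G : SimpleGraph V) : ℕ := G.edgeSet.ncard

/-- The Laplacian spectrum of a finite simple graph, as a multiset of real numbers. -/
noncomputable def lapSpec {V : Type*} [Fintype V] (G : SimpleGraph V) : Multiset ℝ := by
  classical
  exact Finset.univ.val.map (G.posSemidef_lapMatrix ℝ).1.eigenvalues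

/-- The signless Laplacian matrix `D + A` is Hermitian. -/
theorem signless_isHermitian {V : Type*} [Fintype V] [DecidableEq V] (G : SimpleGraph V)
    [DecidableRel G.Adj] : (G.degMatrix ℝ + G.adjMatrix ℝ).IsHermitian := by
  rw [Matrix.IsHermitian, conjTranspose_eq_transpose_of_trivial]
  exact Matrix.IsSymm.add (isSymm_degMatrix (R := ℝ) (G := G)) (isSymm_adjMatrix G)

/-- The signless Laplacian spectrum of a finite simple graph, as a multiset of reals. -/
noncomputable def signlessLapSpec {V : Type*} [Fintype V] (G : SimpleGraph V) : Multiset ℝ := by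
  classical
  exact Finset.univ.val.map (signless_isHermitian G).eigenvalues

/-- The Laplacian energy `LE(G) = ∑ |μ_i - 2m/n|`. -/
noncomputable def lapEnergy {V : Type*} [Fintype V] (G : SimpleGraph V) : ℝ :=
  ((lapSpec G).map (fun x => |x - 2 * (edgeCount G : ℝ) / (Fintype.card V : ℝ)|)).sum

/-- The signless Laplacian energy `LE⁺(G) = ∑ |μ⁺_i - 2m/n|`. -/
noncomputable def signlessLapEnergy {V : Type*} [Fintype V] (G : SimpleGraph V) : ℝ :=
  ((signlessLapSpec G).map (fun x => |x - 2 * (edgeCount G : ℝ) / (Fintype.card V : ℝ)|)).sum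

/-- The join `G ∨ H` of two graphs: disjoint union plus all edges between them. -/
def SimpleGraph.join {V W : Type*} (G : SimpleGraph V) (H : SimpleGraph W) :
    SimpleGraph (V ⊕ W) where
  Adj a b :=
    match a, b with
    | Sum.inl u, Sum.inl v => G.Adj u v
    | Sum.inr u, Sum.inr v => H.Adj u v
    | Sum.inl _, Sum.inr _ => True
    | Sum.inr _, Sum.inl _ => True
  symm := ⟨by rintro (u | u) (v | v) h <;> simp_all [adj_comm]⟩
  loopless := ⟨by rintro (u | u) h <;> simp_all⟩

/-- The tensor (Kronecker) product `G ⊗ H` of two graphs. -/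
def SimpleGraph.tensorProd {V W : Type*} (G : SimpleGraph V) (H : SimpleGraph W) :
    SimpleGraph (V × W) where
  Adj a b := G.Adj a.1 b.1 ∧ H.Adj a.2 b.2
  symm := ⟨fun a b h => ⟨G.adj_symm h.1, H.adj_symm h.2⟩⟩
  loopless := ⟨fun a h => G.irrefl h.1⟩


/-!
Write `p = |V|`, `q = |W|` and `J` for all-ones matrices. The Laplacian of `G ∨ H` is the block
matrix `[[L_G + q, -J], [-J, L_H + p]]`, and the all-ones vector lies in the kernel of `L_G` and
`L_H`. Hence a Schur-complement computation gives
`(x - p) (x - q) χ_{G ∨ H}(x) = x (x - p - q) χ_G(x - q) χ_H(x - p)`: together with `p` and `q`, the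
Laplacian spectrum of the join consists of `0`, `p + q`, the spectrum of `G` shifted by `q` and that
of `H` shifted by `p`. If `p = q = n` and both graphs have `m` edges, the average degree of the join
is `2m/n + n`, so every shifted eigenvalue contributes to `LE(G ∨ H)` exactly what it contributed
to `LE(G)` or `LE(H)`, and the four remaining terms depend on `n` and `m` only.
-/
namespace Polynomial

variable {R : Type*} [CommRing R] [IsDomain R]

theorem eq_of_eval_eq_of_eval_ne_zero [Infinite R] {p q Q : R[X]} (hQ : Q ≠ 0)
    (h : ∀ x, Q.eval x ≠ 0 → p.eval x = q.eval x) : p = q :=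
  eq_of_infinite_eval_eq p q <| (finite_setOfPred_isRoot hQ).infinite_compl.mono fun x hx => h x hx

theorem roots_comp_X_sub_C (p : R[X]) (r : R) :
    (p.comp (X - C r)).roots = p.roots.map (· + r) := by
  simpa [sub_eq_add_neg] using roots_comp_C_mul_X_add_C p 1 (-r) isUnit_one

end Polynomial

namespace Matrix

variable {K m n : Type*} [Field K] [Fintype m] [Fintype n] [DecidableEq m] [DecidableEq n]

theorem inv_mulVec_eq_inv_smul {A : Matrix m m K} (hA : IsUnit A.det) {a : K} {v : m → K}
    (h : A *ᵥ v = a • v) : A⁻¹ *ᵥ v = a⁻¹ • v := by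
  have key : a • (A⁻¹ *ᵥ v) = v := by
    rw [← mulVec_smul, ← h, mulVec_mulVec, nonsing_inv_mul _ hA, one_mulVec]
  rcases eq_or_ne a 0 with rfl | ha
  · have hv : v = 0 := by simpa using key.symm
    simp [hv]
  · rw [← key, smul_smul, inv_mul_cancel₀ ha, one_smul, key]

theorem sum_inv_apply_of_mulVec_one {A : Matrix m m K} (hA : IsUnit A.det) {a : K}
    (h : A *ᵥ 1 = a • 1) : ∑ i, ∑ j, A⁻¹ i j = Fintype.card m * a⁻¹ := by
  have hrow (i : m) : ∑ j, A⁻¹ i j = a⁻¹ := by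
    simpa [mulVec, dotProduct] using congrFun (inv_mulVec_eq_inv_smul hA h) i
  simp [hrow]

theorem det_sub_smul_ones {B : Matrix n n K} (hB : IsUnit B.det) {b : K} (h : B *ᵥ 1 = b • 1)
    (c : K) : (B - c • of fun _ _ => 1).det = B.det * (1 - c * Fintype.card n * b⁻¹) := by
  have hrank_one : B - c • of (fun _ _ => 1) =
      B + replicateCol Unit (fun _ : n => -c) * replicateRow Unit (fun _ : n => (1 : K)) := by
    ext i j
    simp [sub_eq_add_neg, mul_apply]
  rw [hrank_one, det_add_replicateCol_mul_replicateRow hB, det_unique (n := Unit)]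
  simp only [add_apply, one_apply_eq, mul_apply, replicateRow_apply, replicateCol_apply, one_mul,
    ← sum_mul]
  rw [sum_comm, sum_inv_apply_of_mulVec_one hB h]
  ring

theorem det_fromBlocks_ones {A : Matrix m m K} {B : Matrix n n K} (hA : IsUnit A.det)
    (hB : IsUnit B.det) {a b : K} (hA1 : A *ᵥ 1 = a • 1) (hB1 : B *ᵥ 1 = b • 1) :
    (fromBlocks A (of fun _ _ => 1) (of fun _ _ => 1) B).det =
      A.det * B.det * (1 - Fintype.card m * Fintype.card n / (a * b)) := by
  have : Invertible A := A.invertibleOfIsUnitDet hA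
  have hschur : (of fun _ _ => 1 : Matrix n m K) * A⁻¹ * (of fun _ _ => 1 : Matrix m n K) =
      (Fintype.card m * a⁻¹) • of fun _ _ => 1 := by
    ext i j
    simp only [mul_apply, of_apply, one_mul, mul_one, smul_apply, smul_eq_mul,
      ← sum_inv_apply_of_mulVec_one hA hA1]
    exact sum_comm
  rw [det_fromBlocks₁₁, invOf_eq_nonsing_inv, hschur, det_sub_smul_ones hB hB1]
  field_simp

end Matrix

namespace SimpleGraph

variable {V W : Type*}

section Adj

variable {G : SimpleGraph V} {H : SimpleGraph W}

@[simp] theorem join_adj_inl_inl {v v' : V} : (G.join H).Adj (.inl v) (.inl v') ↔ G.Adj v v' :=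
  Iff.rfl

@[simp] theorem join_adj_inr_inr {w w' : W} : (G.join H).Adj (.inr w) (.inr w') ↔ H.Adj w w' :=
  Iff.rfl

@[simp] theorem join_adj_inl_inr {v : V} {w : W} : (G.join H).Adj (.inl v) (.inr w) := trivial

@[simp] theorem join_adj_inr_inl {v : V} {w : W} : (G.join H).Adj (.inr w) (.inl v) := trivial

end Adj

variable [Fintype V] [Fintype W]

theorem edgeCount_eq_card_edgeFinset (G : SimpleGraph V) [DecidableRel G.Adj] :
    edgeCount G = #G.edgeFinset := by
  rw [edgeCount, ← Set.ncard_coe_finset, coe_edgeFinset]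

theorem lapSpec_eq_roots_charpoly [DecidableEq V] (G : SimpleGraph V) [DecidableRel G.Adj] :
    lapSpec G = (G.lapMatrix ℝ).charpoly.roots := by
  rw [(G.posSemidef_lapMatrix ℝ).isHermitian.roots_charpoly_eq_eigenvalues,
    RCLike.ofReal_real_eq_id, Function.id_comp]
  unfold lapSpec
  congr!

theorem scalar_sub_lapMatrix_mulVec_one [DecidableEq V] (G : SimpleGraph V) [DecidableRel G.Adj]
    (x : ℝ) : (scalar V x - G.lapMatrix ℝ) *ᵥ 1 = x • 1 := by
  rw [sub_mulVec, Pi.one_def, G.lapMatrix_mulVec_const_eq_zero, sub_zero]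
  ext
  simp [scalar_apply, mulVec_diagonal]

section Join

variable (G : SimpleGraph V) (H : SimpleGraph W) [DecidableRel (G.join H).Adj]

theorem neighborFinset_join_inl [DecidableRel G.Adj] (v : V) :
    (G.join H).neighborFinset (.inl v) = (G.neighborFinset v).disjSum univ := by
  ext (w | w) <;> simp

theorem degree_join_inl [DecidableRel G.Adj] (v : V) :
    (G.join H).degree (.inl v) = G.degree v + Fintype.card W := by
  rw [← card_neighborFinset_eq_degree, neighborFinset_join_inl, card_disjSum, card_univ,
    card_neighborFinset_eq_degree]

theorem neighborFinset_join_inr [DecidableRel H.Adj] (w : W) :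
    (G.join H).neighborFinset (.inr w) = univ.disjSum (H.neighborFinset w) := by
  ext (v | v) <;> simp

theorem degree_join_inr [DecidableRel H.Adj] (w : W) :
    (G.join H).degree (.inr w) = H.degree w + Fintype.card V := by
  rw [← card_neighborFinset_eq_degree, neighborFinset_join_inr, card_disjSum, card_univ,
    card_neighborFinset_eq_degree, add_comm]

variable [DecidableRel G.Adj] [DecidableRel H.Adj]

theorem two_mul_edgeCount_join :
    2 * edgeCount (G.join H) = 2 * edgeCount G + 2 * edgeCount H
      + 2 * (Fintype.card V * Fintype.card W) := by
  simp only [edgeCount_eq_card_edgeFinset, ← sum_degrees_eq_twice_card_edges,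
    Fintype.sum_sum_type, degree_join_inl, degree_join_inr, sum_add_distrib, sum_const,
    card_univ, smul_eq_mul]
  ring

variable [DecidableEq V] [DecidableEq W]

theorem scalar_sub_lapMatrix_join (x : ℝ) :
    scalar _ x - (G.join H).lapMatrix ℝ =
      fromBlocks (scalar V (x - Fintype.card W) - G.lapMatrix ℝ) (of fun _ _ => 1)
        (of fun _ _ => 1) (scalar W (x - Fintype.card V) - H.lapMatrix ℝ) := by
  ext (v | w) (v' | w') <;>
    simp only [scalar_apply, lapMatrix, degMatrix, Matrix.sub_apply, diagonal_apply,
      adjMatrix_apply, degree_join_inl, degree_join_inr, Nat.cast_add, Sum.inl.injEq,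
      Sum.inr.injEq, reduceCtorEq, join_adj_inl_inl, join_adj_inr_inr, join_adj_inl_inr,
      join_adj_inr_inl, fromBlocks_apply₁₁, fromBlocks_apply₁₂, fromBlocks_apply₂₁,
      fromBlocks_apply₂₂, of_apply, if_true, if_false] <;>
    (try split_ifs) <;> ring

open Polynomial in
theorem charpoly_lapMatrix_join :
    (X - C (Fintype.card V : ℝ)) * (X - C (Fintype.card W : ℝ)) *
        ((G.join H).lapMatrix ℝ).charpoly =
      X * (X - C ((Fintype.card V : ℝ) + Fintype.card W)) *
        ((G.lapMatrix ℝ).charpoly.comp (X - C (Fintype.card W : ℝ)) *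
          (H.lapMatrix ℝ).charpoly.comp (X - C (Fintype.card V : ℝ))) := by
  set p : ℝ := (Fintype.card V : ℝ)
  set q : ℝ := (Fintype.card W : ℝ)
  set χ : ℝ[X] :=
    (G.lapMatrix ℝ).charpoly.comp (X - C q) * (H.lapMatrix ℝ).charpoly.comp (X - C p)
  have hmonic : ((X - C p) * (X - C q) * χ).Monic :=
    ((monic_X_sub_C p).mul (monic_X_sub_C q)).mul
      (((charpoly_monic _).comp_X_sub_C q).mul ((charpoly_monic _).comp_X_sub_C p))
  refine eq_of_eval_eq_of_eval_ne_zero hmonic.ne_zero fun x hx => ?_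
  simp only [χ, eval_mul, eval_comp, eval_sub, eval_X, eval_C, eval_charpoly, mul_ne_zero_iff]
    at hx ⊢
  obtain ⟨⟨hxp, hxq⟩, hA, hB⟩ := hx
  rw [scalar_sub_lapMatrix_join,
    det_fromBlocks_ones (isUnit_iff_ne_zero.2 hA) (isUnit_iff_ne_zero.2 hB)
      (scalar_sub_lapMatrix_mulVec_one G _) (scalar_sub_lapMatrix_mulVec_one H _)]
  field_simp
  ring

end Join

open Polynomial in
theorem lapSpec_join (G : SimpleGraph V) (H : SimpleGraph W) :
    (Fintype.card V : ℝ) ::ₘ (Fintype.card W : ℝ) ::ₘ lapSpec (G.join H) =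
      0 ::ₘ ((Fintype.card V : ℝ) + Fintype.card W) ::ₘ
        ((lapSpec G).map (· + (Fintype.card W : ℝ)) +
          (lapSpec H).map (· + (Fintype.card V : ℝ))) := by
  classical
  have h := congrArg roots (charpoly_lapMatrix_join G H)
  simp (disch := simp only [ne_eq, mul_eq_zero, X_ne_zero, X_sub_C_ne_zero, charpoly_monic,
      Monic.ne_zero, Monic.comp_X_sub_C, or_self, not_false_eq_true]) only
    [roots_mul, roots_X_sub_C, roots_X, roots_comp_X_sub_C] at h
  simpa [lapSpec_eq_roots_charpoly, ← Multiset.singleton_add, add_assoc] using h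

theorem two_mul_edgeCount_join_div_card {G₁ G₂ : SimpleGraph V}
    (h : edgeCount G₁ = edgeCount G₂) :
    2 * (edgeCount (G₁.join G₂) : ℝ) / Fintype.card (V ⊕ V) =
      2 * (edgeCount G₁ : ℝ) / Fintype.card V + Fintype.card V := by
  classical
  have h2 : (2 * edgeCount (G₁.join G₂) : ℝ) =
      2 * (2 * edgeCount G₁ + Fintype.card V * Fintype.card V) := by
    exact_mod_cast (two_mul_edgeCount_join G₁ G₂).trans (by rw [← h]; ring)
  rw [h2, Fintype.card_sum]
  rcases eq_or_ne (Fintype.card V : ℝ) 0 with hV | hV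
  · simp [hV]
  · push_cast
    field_simp
    ring

theorem lapEnergy_join {G₁ G₂ : SimpleGraph V} (h : edgeCount G₁ = edgeCount G₂) :
    lapEnergy (G₁.join G₂) = lapEnergy G₁ + lapEnergy G₂ +
      (Fintype.card V - 2 * edgeCount G₁ / Fintype.card V +
        |Fintype.card V - 2 * (edgeCount G₁ : ℝ) / Fintype.card V|) := by
  have hspec := lapSpec_join G₁ G₂
  unfold lapEnergy
  rw [two_mul_edgeCount_join_div_card h, ← h]
  have hd : 0 ≤ 2 * (edgeCount G₁ : ℝ) / Fintype.card V := by positivity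
  have hn : (0 : ℝ) ≤ Fintype.card V := by positivity
  generalize 2 * (edgeCount G₁ : ℝ) / Fintype.card V = d at hd ⊢
  generalize (Fintype.card V : ℝ) = n at hn hspec ⊢
  have hsum := congrArg (fun s => (s.map fun x => |x - (d + n)|).sum) hspec
  simp only [Multiset.map_cons, Multiset.sum_cons, Multiset.map_add, Multiset.sum_add,
    Multiset.map_map, Function.comp_def, add_sub_add_right_eq_sub] at hsum
  have hshift : |n - (d + n)| = d := by
    rw [sub_add_cancel_right, abs_neg, abs_of_nonneg hd]
  have hzero : |0 - (d + n)| = d + n := by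
    rw [zero_sub, abs_neg, abs_of_nonneg (by positivity)]
  linarith

end SimpleGraph

theorem stmt16 (n m : ℕ)
    (G₁ G₁' G₂ G₂' : SimpleGraph (Fin n))
    (hm₁ : edgeCount G₁ = m) (hm₁' : edgeCount G₁' = m)
    (hm₂ : edgeCount G₂ = m) (hm₂' : edgeCount G₂' = m)
    (h₁ : lapEnergy G₁ = lapEnergy G₁') (h₂ : lapEnergy G₂ = lapEnergy G₂') :
    lapEnergy (SimpleGraph.join G₁ G₂) = lapEnergy (SimpleGraph.join G₁' G₂') := by
  rw [SimpleGraph.lapEnergy_join (hm₁.trans hm₂.symm),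
    SimpleGraph.lapEnergy_join (hm₁'.trans hm₂'.symm), h₁, h₂, hm₁, hm₁']
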